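/- arXiv:2507.09181 — 2 statements merged into one kernel-verified Lean document; each statement's English description precedes it below -/
import Mathlib

section
/- Let ρ : L∞₊ → [0,∞) be a convex return risk measure satisfying the Fatou property. Then for every X ∈ L∞₊, ρ(X) = sup over probability measures Q on (Ω, F) with Q ≪ P of β(Q)·E_Q[X], where β(Q) := (sup_{Y ∈ B_ρ} E_Q[Y])^{-1} and B_ρ := {Y ∈ L∞₊ : ρ(Y) ≤ 1} is the multiplicative acceptance set of ρ. -/
/-!
`β(Q) E_Q[X] ≤ ρ(X)` because `X / r ∈ B_ρ` for every `r > ρ(X)`. Conversely, if `r < ρ(X)`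
then `X / r ∉ B_ρ`, and `B_ρ` is convex and, by the Fatou property, closed in `L²(P)`. A
Hahn–Banach functional separating `X / r` from `B_ρ` is given by a density that may be taken
nonnegative because `B_ρ` is solid; normalised, it is a probability `Q ≪ P` with
`β(Q) E_Q[X] ≥ r`.
-/

open MeasureTheory Filter Set
open scoped ENNReal

noncomputable section

variable {Ω : Type*} [MeasurableSpace Ω]

/-- `X` belongs to `L^∞_+(P)`: it is measurable, `P`-a.s. nonnegative and
`P`-essentially bounded. -/
def MemLinftyPlus (P : Measure Ω) (X : Ω → ℝ) : Prop :=
  Measurable X ∧ (∀ᵐ ω ∂P, 0 ≤ X ω) ∧ ∃ C : ℝ, ∀ᵐ ω ∂P, X ω ≤ C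

/-- `X` belongs to `L^∞_++(P)`: it is measurable, bounded away from `0` and
`P`-essentially bounded. -/
def MemLinftyPlusPlus (P : Measure Ω) (X : Ω → ℝ) : Prop :=
  Measurable X ∧ (∃ c : ℝ, 0 < c ∧ ∀ᵐ ω ∂P, c ≤ X ω) ∧ ∃ C : ℝ, ∀ᵐ ω ∂P, X ω ≤ C

/-- An Orlicz function `Φ : [0,∞) → ℝ ∪ {±∞}`: nondecreasing, left-continuous,
`Φ(x) > -∞` for `x > 0`, `Φ(x) ≤ 1` for `0 ≤ x ≤ 1` and `Φ(x) > 1` for `x > 1`. -/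
structure IsOrliczFunction (Φ : ℝ → EReal) : Prop where
  ne_bot : ∀ x : ℝ, 0 < x → Φ x ≠ ⊥
  le_one : ∀ x : ℝ, 0 ≤ x → x ≤ 1 → Φ x ≤ 1
  one_lt : ∀ x : ℝ, 1 < x → 1 < Φ x
  mono : ∀ x y : ℝ, 0 ≤ x → x ≤ y → Φ x ≤ Φ y
  left_cont : ∀ x : ℝ, 0 < x → Φ x = ⨆ y : Set.Ico (0 : ℝ) x, Φ (y : ℝ)

/-- The nonnegative part of an extended real, as an extended nonnegative real. -/
def erealToENNReal (x : EReal) : ℝ≥0∞ :=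
  if x = ⊤ then ⊤ else ENNReal.ofReal x.toReal

/-- Expectation of an extended-real-valued function: positive part minus negative part. -/
def eexp (P : Measure Ω) (f : Ω → EReal) : EReal :=
  ((∫⁻ ω, erealToENNReal (f ω) ∂P : ℝ≥0∞) : EReal)
    - ((∫⁻ ω, erealToENNReal (-(f ω)) ∂P : ℝ≥0∞) : EReal)

/-- The (generalized) Orlicz premium `H_Φ(X) = inf {k > 0 | E[Φ(X/k)] ≤ 1}`, with the
convention `H_Φ(X) = 0` if `Φ(0) = -∞` and `P(X = 0) > 0`. -/
def orliczPremium (P : Measure Ω) (Φ : ℝ → EReal) (X : Ω → ℝ) : ℝ :=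
  if Φ 0 = ⊥ ∧ 0 < P {ω | X ω = 0} then 0
  else sInf {k : ℝ | 0 < k ∧ eexp P (fun ω => Φ (X ω / k)) ≤ 1}

/-- Addition on `EReal` with the convention `(-∞) + (+∞) = +∞`. -/
def eadd (a b : EReal) : EReal :=
  if (a = ⊥ ∧ b = ⊤) ∨ (a = ⊤ ∧ b = ⊥) then ⊤ else a + b

/-- Multiplication on `ℝ≥0∞` with the convention `0 * ∞ = ∞`. -/
def gmulE (a b : ℝ≥0∞) : ℝ≥0∞ :=
  if (a = 0 ∧ b = ⊤) ∨ (a = ⊤ ∧ b = 0) then ⊤ else a * b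

section ReturnRiskMeasure

variable (P : Measure Ω) (ρ : (Ω → ℝ) → ℝ)

def MonotoneOnLinftyPlus : Prop :=
  ∀ X Y : Ω → ℝ, MemLinftyPlus P X → MemLinftyPlus P Y →
    (∀ᵐ ω ∂P, X ω ≤ Y ω) → ρ X ≤ ρ Y

def PosHomogeneousOnLinftyPlus : Prop :=
  ∀ X : Ω → ℝ, MemLinftyPlus P X → ∀ l : ℝ, 0 ≤ l → ρ (fun ω => l * X ω) = l * ρ X

def ConvexOnLinftyPlus : Prop :=
  ∀ X Y : Ω → ℝ, MemLinftyPlus P X → MemLinftyPlus P Y →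
    ∀ a ∈ Set.Ioo (0 : ℝ) 1,
      ρ (fun ω => a * X ω + (1 - a) * Y ω) ≤ a * ρ X + (1 - a) * ρ Y

def HasFatouProperty : Prop :=
  ∀ (X : Ω → ℝ) (Xn : ℕ → Ω → ℝ) (k : ℝ),
    MemLinftyPlus P X → (∀ n, MemLinftyPlus P (Xn n)) →
    (∀ n, ∀ᵐ ω ∂P, |Xn n ω| ≤ k) →
    TendstoInMeasure P Xn atTop X →
    ρ X ≤ atTop.liminf fun n => ρ (Xn n)

/-- The multiplicative acceptance set `B_ρ`. -/
def acceptanceSet : Set (Ω → ℝ) := {Y | MemLinftyPlus P Y ∧ ρ Y ≤ 1}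

def acceptanceSetLp (p : ℝ≥0∞) : Set (Lp ℝ p P) :=
  {g | ∃ Y ∈ acceptanceSet P ρ, (g : Ω → ℝ) =ᵐ[P] Y}

/-- The weight `β(Q)`. -/
def dualWeight (Q : Measure Ω) : ℝ≥0∞ :=
  (⨆ Y ∈ acceptanceSet P ρ, ENNReal.ofReal (∫ ω, Y ω ∂Q))⁻¹

end ReturnRiskMeasure

theorem MeasureTheory.TendstoInMeasure.comp_lipschitzWith {α ι E F : Type*}
    [MeasurableSpace α] {μ : Measure α} {l : Filter ι} [PseudoEMetricSpace E]
    [PseudoEMetricSpace F] {f : ι → α → E} {g : α → E} {φ : E → F} {K : NNReal}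
    (hφ : LipschitzWith K φ) (h : TendstoInMeasure μ f l g) :
    TendstoInMeasure μ (fun i x => φ (f i x)) l (fun x => φ (g x)) := by
  intro ε hε
  have hε' : 0 < ε / (K + 1) := ENNReal.div_pos hε.ne' (by simp)
  refine tendsto_of_tendsto_of_tendsto_of_le_of_le tendsto_const_nhds (h _ hε')
    (fun _ => zero_le) (fun i => measure_mono fun x (hx : ε ≤ _) => ?_)
  refine ENNReal.div_le_of_le_mul' (hx.trans ((hφ.edist_le_mul _ _).trans ?_))
  gcongr
  exact le_self_add

namespace MemLinftyPlus

variable {P : Measure Ω} {X Y Z : Ω → ℝ}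

lemma exists_ae_abs_le (hX : MemLinftyPlus P X) : ∃ C, ∀ᵐ ω ∂P, |X ω| ≤ C := by
  obtain ⟨-, h0, C, hC⟩ := hX
  exact ⟨C, by filter_upwards [h0, hC] with ω h0 hC using (abs_of_nonneg h0).trans_le hC⟩

lemma memLp [IsFiniteMeasure P] (hX : MemLinftyPlus P X) (p : ℝ≥0∞) : MemLp X p P := by
  obtain ⟨C, hC⟩ := hX.exists_ae_abs_le
  exact MemLp.of_bound hX.1.aestronglyMeasurable C hC

lemma integrable_mul (hX : MemLinftyPlus P X) (hZ : Integrable Z P) :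
    Integrable (fun ω => Z ω * X ω) P := by
  obtain ⟨C, hC⟩ := hX.exists_ae_abs_le
  exact hZ.mul_bdd hX.1.aestronglyMeasurable hC

lemma const_mul (hX : MemLinftyPlus P X) {l : ℝ} (hl : 0 ≤ l) :
    MemLinftyPlus P (fun ω => l * X ω) := by
  obtain ⟨hm, h0, C, hC⟩ := hX
  exact ⟨hm.const_mul l, by filter_upwards [h0] with ω h using mul_nonneg hl h,
    l * C, by filter_upwards [hC] with ω h using mul_le_mul_of_nonneg_left h hl⟩

lemma add (hX : MemLinftyPlus P X) (hY : MemLinftyPlus P Y) :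
    MemLinftyPlus P (fun ω => X ω + Y ω) := by
  obtain ⟨hmX, h0X, C, hC⟩ := hX
  obtain ⟨hmY, h0Y, D, hD⟩ := hY
  exact ⟨hmX.add hmY, by filter_upwards [h0X, h0Y] with ω h h' using add_nonneg h h',
    C + D, by filter_upwards [hC, hD] with ω h h' using add_le_add h h'⟩

lemma min_const (hX : MemLinftyPlus P X) {c : ℝ} (hc : 0 ≤ c) :
    MemLinftyPlus P (fun ω => min (X ω) c) :=
  ⟨hX.1.min measurable_const, by filter_upwards [hX.2.1] with ω h using le_min h hc,
    c, ae_of_all _ fun _ => min_le_right _ _⟩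

lemma indicator (hX : MemLinftyPlus P X) {s : Set Ω} (hs : MeasurableSet s) :
    MemLinftyPlus P (s.indicator X) := by
  obtain ⟨hm, h0, C, hC⟩ := hX
  refine ⟨hm.indicator hs, ?_, max C 0, ?_⟩
  · filter_upwards [h0] with ω h
    exact Set.indicator_nonneg (fun _ _ => h) ω
  · filter_upwards [hC] with ω h
    by_cases hω : ω ∈ s <;> simp [hω, h]

end MemLinftyPlus

lemma memLinftyPlus_zero (P : Measure Ω) : MemLinftyPlus P 0 :=
  ⟨measurable_const, ae_of_all _ fun _ => le_rfl, 0, ae_of_all _ fun _ => le_rfl⟩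

section AcceptanceSet

variable {P : Measure Ω} {ρ : (Ω → ℝ) → ℝ}

lemma zero_mem_acceptanceSet (hhom : PosHomogeneousOnLinftyPlus P ρ) :
    0 ∈ acceptanceSet P ρ := by
  refine ⟨memLinftyPlus_zero P, ?_⟩
  have h := hhom 0 (memLinftyPlus_zero P) 0 le_rfl
  simp only [Pi.zero_apply, mul_zero, zero_mul] at h
  exact h.le.trans zero_le_one

lemma convex_acceptanceSet (hconv : ConvexOnLinftyPlus P ρ) :
    Convex ℝ (acceptanceSet P ρ) := by
  refine convex_iff_pairwise_pos.2 fun Y₁ hY₁ Y₂ hY₂ _ a b ha hb hab => ?_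
  obtain rfl : b = 1 - a := by linarith
  refine ⟨(hY₁.1.const_mul ha.le).add (hY₂.1.const_mul hb.le), ?_⟩
  calc ρ (fun ω => a * Y₁ ω + (1 - a) * Y₂ ω) ≤ a * ρ Y₁ + (1 - a) * ρ Y₂ :=
        hconv Y₁ Y₂ hY₁.1 hY₂.1 a ⟨ha, by linarith⟩
    _ ≤ a * 1 + (1 - a) * 1 := by gcongr; exacts [hY₁.2, hY₂.2]
    _ = 1 := by ring

lemma convex_acceptanceSetLp (hconv : ConvexOnLinftyPlus P ρ) (p : ℝ≥0∞) :
    Convex ℝ (acceptanceSetLp P ρ p) := by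
  rintro g₁ ⟨Y₁, hY₁, hg₁⟩ g₂ ⟨Y₂, hY₂, hg₂⟩ a b ha hb hab
  refine ⟨a • Y₁ + b • Y₂, convex_acceptanceSet hconv hY₁ hY₂ ha hb hab, ?_⟩
  filter_upwards [Lp.coeFn_add (a • g₁) (b • g₂), Lp.coeFn_smul a g₁, Lp.coeFn_smul b g₂,
    hg₁, hg₂] with ω h h₁ h₂ h₁' h₂'
  simp only [h, Pi.add_apply, h₁, h₂, Pi.smul_apply, h₁', h₂']

/-- Closedness of `B_ρ` in `L^p`: truncating an approximating sequence at an essential bound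
of `X` keeps it in `B_ρ`, makes it uniformly bounded, and preserves convergence in measure,
so the Fatou property applies. -/
lemma le_one_of_toLp_mem_closure_acceptanceSetLp [IsFiniteMeasure P] {p : ℝ≥0∞}
    [Fact (1 ≤ p)] (hmono : MonotoneOnLinftyPlus P ρ) (hFatou : HasFatouProperty P ρ)
    (hnonneg : ∀ X : Ω → ℝ, MemLinftyPlus P X → 0 ≤ ρ X) {X : Ω → ℝ}
    (hX : MemLinftyPlus P X) (hmem : (hX.memLp p).toLp X ∈ closure (acceptanceSetLp P ρ p)) :
    ρ X ≤ 1 := by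
  obtain ⟨g, hgB, hg⟩ := mem_closure_iff_seq_limit.1 hmem
  choose Y hYB hgY using hgB
  have hYX : TendstoInMeasure P Y atTop X :=
    (tendstoInMeasure_of_tendsto_Lp hg).congr hgY (hX.memLp p).coeFn_toLp
  obtain ⟨C, hC⟩ := hX.2.2
  set k := max C 0
  set T : ℕ → Ω → ℝ := fun n ω => min (Y n ω) k
  have hT : ∀ n, MemLinftyPlus P (T n) := fun n => (hYB n).1.min_const (le_max_right C 0)
  have hTB : ∀ n, ρ (T n) ≤ 1 := fun n =>
    (hmono _ _ (hT n) (hYB n).1 (ae_of_all _ fun _ => min_le_left _ _)).trans (hYB n).2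
  have hTk : ∀ n, ∀ᵐ ω ∂P, |T n ω| ≤ k := fun n => by
    filter_upwards [(hT n).2.1] with ω h
    exact abs_le.2 ⟨by linarith [le_max_right C 0], min_le_right _ _⟩
  have hTX : TendstoInMeasure P T atTop X := by
    refine (hYX.comp_lipschitzWith (LipschitzWith.id.min_const k)).congr_right ?_
    filter_upwards [hC] with ω h
    exact min_eq_left (h.trans (le_max_left C 0))
  calc ρ X ≤ atTop.liminf fun n => ρ (T n) := hFatou X T k hX hT hTk hTX
    _ ≤ 1 := liminf_le_of_frequently_le (Frequently.of_forall hTB)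
        (isBoundedUnder_of ⟨0, fun n => hnonneg _ (hT n)⟩)

end AcceptanceSet

/-- Riesz representation. -/
lemma exists_measurable_integral_mul_eq (P : Measure Ω) (f : StrongDual ℝ (Lp ℝ 2 P)) :
    ∃ w : Ω → ℝ, Measurable w ∧ MemLp w 2 P ∧
      ∀ (g : Ω → ℝ) (hg : MemLp g 2 P), f (hg.toLp g) = ∫ ω, w ω * g ω ∂P := by
  obtain ⟨z, rfl⟩ := (InnerProductSpace.toDual ℝ (Lp ℝ 2 P)).surjective f
  have hz := Lp.aestronglyMeasurable z
  refine ⟨hz.mk z, hz.stronglyMeasurable_mk.measurable,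
    (Lp.memLp z).ae_eq hz.ae_eq_mk, fun g hg => ?_⟩
  rw [InnerProductSpace.toDual_apply_apply, L2.inner_def]
  refine integral_congr_ae ?_
  filter_upwards [hz.ae_eq_mk, hg.coeFn_toLp] with ω h h'
  rw [RCLike.inner_apply', conj_trivial, h, h']

lemma exists_isProbabilityMeasure_integral_eq_inv_mul {P : Measure Ω} {Z : Ω → ℝ}
    (hZm : Measurable Z) (hZ : ∀ ω, 0 ≤ Z ω) (hZi : Integrable Z P)
    (hc : 0 < ∫ ω, Z ω ∂P) :
    ∃ Q : Measure Ω, IsProbabilityMeasure Q ∧ Q ≪ P ∧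
      ∀ g : Ω → ℝ, ∫ ω, g ω ∂Q = (∫ ω, Z ω ∂P)⁻¹ * ∫ ω, Z ω * g ω ∂P := by
  set c := ∫ ω, Z ω ∂P
  have hdens : ∀ ω, 0 ≤ Z ω / c := fun ω => div_nonneg (hZ ω) hc.le
  refine ⟨P.withDensity fun ω => (Z ω / c).toNNReal, ⟨?_⟩,
    withDensity_absolutelyContinuous _ _, fun g => ?_⟩
  · rw [withDensity_apply _ MeasurableSet.univ, setLIntegral_univ]
    simp only [ENNReal.ofNNReal_toNNReal]
    rw [← ofReal_integral_eq_lintegral_ofReal (hZi.div_const c) (ae_of_all _ hdens),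
      integral_div, div_self hc.ne', ENNReal.ofReal_one]
  · rw [integral_withDensity_eq_integral_smul (hZm.div_const c).real_toNNReal,
      ← integral_const_mul]
    refine integral_congr_ae (ae_of_all _ fun ω => ?_)
    simp only [NNReal.smul_def, Real.coe_toNNReal _ (hdens ω), smul_eq_mul]
    ring

section Separation

variable {P : Measure Ω} [IsProbabilityMeasure P] {ρ : (Ω → ℝ) → ℝ}
  {X : Ω → ℝ}

lemma exists_memLp_two_separating (hmono : MonotoneOnLinftyPlus P ρ)
    (hconv : ConvexOnLinftyPlus P ρ) (hFatou : HasFatouProperty P ρ)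
    (hnonneg : ∀ X : Ω → ℝ, MemLinftyPlus P X → 0 ≤ ρ X)
    (hX : MemLinftyPlus P X) (hρX : 1 < ρ X) :
    ∃ w : Ω → ℝ, Measurable w ∧ MemLp w 2 P ∧ ∃ u : ℝ,
      (∀ Y ∈ acceptanceSet P ρ, ∫ ω, w ω * Y ω ∂P < u) ∧ u < ∫ ω, w ω * X ω ∂P := by
  have hXB : (hX.memLp 2).toLp X ∉ closure (acceptanceSetLp P ρ 2) := fun h =>
    hρX.not_ge (le_one_of_toLp_mem_closure_acceptanceSetLp hmono hFatou hnonneg hX h)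
  obtain ⟨f, u, hfB, hfX⟩ :=
    geometric_hahn_banach_closed_point (convex_acceptanceSetLp hconv 2).closure
      isClosed_closure hXB
  obtain ⟨w, hwm, hw, hfw⟩ := exists_measurable_integral_mul_eq P f
  refine ⟨w, hwm, hw, u, fun Y hY => ?_, by rwa [← hfw]⟩
  rw [← hfw _ (hY.1.memLp 2)]
  exact hfB _ (subset_closure ⟨Y, hY, (hY.1.memLp 2).coeFn_toLp⟩)

/-- Since `B_ρ` is solid, replacing the separating density by its positive part keeps
it separating. -/
lemma exists_nonneg_separating (hmono : MonotoneOnLinftyPlus P ρ)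
    (hconv : ConvexOnLinftyPlus P ρ) (hFatou : HasFatouProperty P ρ)
    (hnonneg : ∀ X : Ω → ℝ, MemLinftyPlus P X → 0 ≤ ρ X)
    (hX : MemLinftyPlus P X) (hρX : 1 < ρ X) :
    ∃ Z : Ω → ℝ, Measurable Z ∧ (∀ ω, 0 ≤ Z ω) ∧ Integrable Z P ∧ ∃ u : ℝ,
      (∀ Y ∈ acceptanceSet P ρ, ∫ ω, Z ω * Y ω ∂P ≤ u) ∧ u < ∫ ω, Z ω * X ω ∂P := by
  obtain ⟨w, hwm, hw, u, hwB, hwX⟩ :=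
    exists_memLp_two_separating hmono hconv hFatou hnonneg hX hρX
  have hwi : Integrable w P := hw.integrable one_le_two
  refine ⟨fun ω => max (w ω) 0, hwm.max measurable_const, fun ω => le_max_right _ _,
    hwi.pos_part, u, fun Y hY => ?_, ?_⟩
  · set s := {ω | 0 ≤ w ω}
    have hs : MeasurableSet s := measurableSet_le measurable_const hwm
    have hYs : s.indicator Y ∈ acceptanceSet P ρ := by
      refine ⟨hY.1.indicator hs, (hmono _ _ (hY.1.indicator hs) hY.1 ?_).trans hY.2⟩
      filter_upwards [hY.1.2.1] with ω h
      exact Set.indicator_le_self' (fun _ _ => h) ω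
    calc ∫ ω, max (w ω) 0 * Y ω ∂P = ∫ ω, w ω * s.indicator Y ω ∂P := by
          refine integral_congr_ae (ae_of_all _ fun ω => ?_)
          by_cases hω : 0 ≤ w ω
          · simp [s, hω]
          · simp [s, hω, max_eq_right (le_of_not_ge hω)]
      _ ≤ u := (hwB _ hYs).le
  · refine hwX.trans_le (integral_mono_ae (hX.integrable_mul hwi)
      (hX.integrable_mul hwi.pos_part) ?_)
    filter_upwards [hX.2.1] with ω h
    exact mul_le_mul_of_nonneg_right (le_max_left _ _) h

end Separation

section DualWeight

variable {P : Measure Ω} {ρ : (Ω → ℝ) → ℝ} {X : Ω → ℝ}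

lemma dualWeight_mul_le_one {Y : Ω → ℝ} (hY : Y ∈ acceptanceSet P ρ) (Q : Measure Ω) :
    dualWeight P ρ Q * ENNReal.ofReal (∫ ω, Y ω ∂Q) ≤ 1 :=
  calc dualWeight P ρ Q * ENNReal.ofReal (∫ ω, Y ω ∂Q)
      ≤ dualWeight P ρ Q * ⨆ Y ∈ acceptanceSet P ρ, ENNReal.ofReal (∫ ω, Y ω ∂Q) := by
        gcongr
        exact le_iSup₂ (f := fun Y (_ : Y ∈ acceptanceSet P ρ) => ENNReal.ofReal (∫ ω, Y ω ∂Q))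
          Y hY
    _ ≤ 1 := ENNReal.inv_mul_le_one _

lemma dualWeight_mul_integral_inv_mul (Q : Measure Ω) {r : ℝ} (hr : 0 < r) :
    dualWeight P ρ Q * ENNReal.ofReal (∫ ω, X ω ∂Q) =
      ENNReal.ofReal r * (dualWeight P ρ Q * ENNReal.ofReal (∫ ω, r⁻¹ * X ω ∂Q)) := by
  rw [integral_const_mul, ENNReal.ofReal_mul (inv_nonneg.2 hr.le), mul_left_comm,
    ← mul_assoc (ENNReal.ofReal r), ← ENNReal.ofReal_mul hr.le, mul_inv_cancel₀ hr.ne',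
    ENNReal.ofReal_one, one_mul]

lemma dualWeight_mul_le_of_lt (hhom : PosHomogeneousOnLinftyPlus P ρ)
    (hX : MemLinftyPlus P X) {r : ℝ} (hr : 0 < r) (hρX : ρ X < r) (Q : Measure Ω) :
    dualWeight P ρ Q * ENNReal.ofReal (∫ ω, X ω ∂Q) ≤ ENNReal.ofReal r := by
  have hY : (fun ω => r⁻¹ * X ω) ∈ acceptanceSet P ρ := by
    refine ⟨hX.const_mul (inv_nonneg.2 hr.le), ?_⟩
    rw [hhom X hX _ (inv_nonneg.2 hr.le), inv_mul_le_one₀ hr]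
    exact hρX.le
  calc dualWeight P ρ Q * ENNReal.ofReal (∫ ω, X ω ∂Q)
      = ENNReal.ofReal r * (dualWeight P ρ Q * ENNReal.ofReal (∫ ω, r⁻¹ * X ω ∂Q)) :=
        dualWeight_mul_integral_inv_mul Q hr
    _ ≤ ENNReal.ofReal r := mul_le_of_le_one_right' (dualWeight_mul_le_one hY Q)

lemma exists_one_le_dualWeight_mul [IsProbabilityMeasure P]
    (hmono : MonotoneOnLinftyPlus P ρ) (hhom : PosHomogeneousOnLinftyPlus P ρ)
    (hconv : ConvexOnLinftyPlus P ρ) (hFatou : HasFatouProperty P ρ)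
    (hnonneg : ∀ X : Ω → ℝ, MemLinftyPlus P X → 0 ≤ ρ X)
    (hX : MemLinftyPlus P X) (hρX : 1 < ρ X) :
    ∃ Q : Measure Ω, IsProbabilityMeasure Q ∧ Q ≪ P ∧
      1 ≤ dualWeight P ρ Q * ENNReal.ofReal (∫ ω, X ω ∂Q) := by
  obtain ⟨Z, hZm, hZ, hZi, u, hZB, hZX⟩ :=
    exists_nonneg_separating hmono hconv hFatou hnonneg hX hρX
  have hu : 0 ≤ u := by simpa using hZB 0 (zero_mem_acceptanceSet hhom)
  have hc : 0 < ∫ ω, Z ω ∂P := by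
    refine (integral_nonneg hZ).lt_of_ne fun hc => hu.not_gt (hZX.trans_le ?_)
    have hZ0 : Z =ᵐ[P] 0 := (integral_eq_zero_iff_of_nonneg hZ hZi).1 hc.symm
    rw [integral_eq_zero_of_ae (by filter_upwards [hZ0] with ω h using by simp [h])]
  obtain ⟨Q, hQ, hQP, hQ_eq⟩ := exists_isProbabilityMeasure_integral_eq_inv_mul hZm hZ hZi hc
  have hXQ : (∫ ω, Z ω ∂P)⁻¹ * u < ∫ ω, X ω ∂Q := by
    rw [hQ_eq]
    gcongr
  have hsup : ⨆ Y ∈ acceptanceSet P ρ, ENNReal.ofReal (∫ ω, Y ω ∂Q) ≤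
      ENNReal.ofReal (∫ ω, X ω ∂Q) := by
    refine iSup₂_le fun Y hY => ENNReal.ofReal_le_ofReal ?_
    rw [hQ_eq]
    exact (mul_le_mul_of_nonneg_left (hZB Y hY) (inv_nonneg.2 hc.le)).trans hXQ.le
  have hXQ0 : ENNReal.ofReal (∫ ω, X ω ∂Q) ≠ 0 :=
    ENNReal.ofReal_pos.2 ((mul_nonneg (inv_nonneg.2 hc.le) hu).trans_lt hXQ) |>.ne'
  refine ⟨Q, hQ, hQP, ?_⟩
  calc 1 = (ENNReal.ofReal (∫ ω, X ω ∂Q))⁻¹ * ENNReal.ofReal (∫ ω, X ω ∂Q) :=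
        (ENNReal.inv_mul_cancel hXQ0 ENNReal.ofReal_ne_top).symm
    _ ≤ dualWeight P ρ Q * ENNReal.ofReal (∫ ω, X ω ∂Q) := by
        gcongr
        exact ENNReal.inv_le_inv.2 hsup

lemma ofReal_le_iSup_dualWeight_mul [IsProbabilityMeasure P]
    (hmono : MonotoneOnLinftyPlus P ρ) (hhom : PosHomogeneousOnLinftyPlus P ρ)
    (hconv : ConvexOnLinftyPlus P ρ) (hFatou : HasFatouProperty P ρ)
    (hnonneg : ∀ X : Ω → ℝ, MemLinftyPlus P X → 0 ≤ ρ X)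
    (hX : MemLinftyPlus P X) {r : ℝ} (hρX : r < ρ X) :
    ENNReal.ofReal r ≤ ⨆ (Q : Measure Ω) (_ : IsProbabilityMeasure Q) (_ : Q ≪ P),
      dualWeight P ρ Q * ENNReal.ofReal (∫ ω, X ω ∂Q) := by
  rcases le_or_gt r 0 with hr | hr
  · simp [ENNReal.ofReal_eq_zero.2 hr]
  have hρX' : 1 < ρ fun ω => r⁻¹ * X ω := by
    rw [hhom X hX _ (inv_nonneg.2 hr.le), one_lt_inv_mul₀ hr]
    exact hρX
  obtain ⟨Q, hQ, hQP, hQ1⟩ := exists_one_le_dualWeight_mul hmono hhom hconv hFatou hnonneg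
    (hX.const_mul (inv_nonneg.2 hr.le)) hρX'
  refine le_iSup_of_le Q (le_iSup_of_le hQ (le_iSup_of_le hQP ?_))
  rw [dualWeight_mul_integral_inv_mul Q hr]
  exact le_mul_of_one_le_right' hQ1

end DualWeight

theorem convexReturnRiskMeasure_dual_representation_general
    (P : Measure Ω) [IsProbabilityMeasure P] (ρ : (Ω → ℝ) → ℝ)
    (hmono : ∀ X Y : Ω → ℝ, MemLinftyPlus P X → MemLinftyPlus P Y →
      (∀ᵐ ω ∂P, X ω ≤ Y ω) → ρ X ≤ ρ Y)
    (hhom : ∀ X : Ω → ℝ, MemLinftyPlus P X → ∀ l : ℝ, 0 ≤ l →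
      ρ (fun ω => l * X ω) = l * ρ X)
    (hnonneg : ∀ X : Ω → ℝ, MemLinftyPlus P X → 0 ≤ ρ X)
    (hconv : ∀ X Y : Ω → ℝ, MemLinftyPlus P X → MemLinftyPlus P Y →
      ∀ a ∈ Set.Ioo (0 : ℝ) 1,
        ρ (fun ω => a * X ω + (1 - a) * Y ω) ≤ a * ρ X + (1 - a) * ρ Y)
    (hFatou : ∀ (X : Ω → ℝ) (Xn : ℕ → Ω → ℝ) (k : ℝ),
      MemLinftyPlus P X → (∀ n, MemLinftyPlus P (Xn n)) →
      (∀ n, ∀ᵐ ω ∂P, |Xn n ω| ≤ k) →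
      TendstoInMeasure P Xn atTop X →
      ρ X ≤ atTop.liminf fun n => ρ (Xn n))
    (X : Ω → ℝ) (hX : MemLinftyPlus P X) :
    ENNReal.ofReal (ρ X) =
      ⨆ (Q : Measure Ω) (_ : IsProbabilityMeasure Q) (_ : Q ≪ P),
        (⨆ (Y : Ω → ℝ) (_ : MemLinftyPlus P Y ∧ ρ Y ≤ 1),
            ENNReal.ofReal (∫ ω, Y ω ∂Q))⁻¹ *
          ENNReal.ofReal (∫ ω, X ω ∂Q) := by
  have hofReal := ENNReal.continuous_ofReal.tendsto (ρ X)
  refine le_antisymm ?_ (iSup_le fun Q => iSup_le fun _ => iSup_le fun _ => ?_)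
  · refine le_of_tendsto (hofReal.mono_left (nhdsWithin_le_nhds (s := Iio (ρ X))))
      (eventually_nhdsWithin_of_forall fun r hr => ?_)
    exact ofReal_le_iSup_dualWeight_mul hmono hhom hconv hFatou hnonneg hX hr
  · refine ge_of_tendsto (hofReal.mono_left (nhdsWithin_le_nhds (s := Ioi (ρ X))))
      (eventually_nhdsWithin_of_forall fun r hr => ?_)
    exact dualWeight_mul_le_of_lt hhom hX ((hnonneg X hX).trans_lt hr) hr Q

/-- dual representation of a convex return risk measure with the
Fatou property: `ρ(X) = sup_{Q ≪ P} β(Q) E_Q[X]` where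
`β(Q) = (sup_{Y ∈ B_ρ} E_Q[Y])⁻¹` (with `(+∞)⁻¹ = 0`). -/
theorem convexReturnRiskMeasure_dual_representation
    (P : Measure Ω) [IsProbabilityMeasure P] (ρ : (Ω → ℝ) → ℝ)
    (hmono : ∀ X Y : Ω → ℝ, MemLinftyPlus P X → MemLinftyPlus P Y →
      (∀ᵐ ω ∂P, X ω ≤ Y ω) → ρ X ≤ ρ Y)
    (hhom : ∀ X : Ω → ℝ, MemLinftyPlus P X → ∀ l : ℝ, 0 ≤ l →
      ρ (fun ω => l * X ω) = l * ρ X)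
    (hnorm : ρ (fun _ => (1 : ℝ)) = 1)
    (hnonneg : ∀ X : Ω → ℝ, MemLinftyPlus P X → 0 ≤ ρ X)
    (hconv : ∀ X Y : Ω → ℝ, MemLinftyPlus P X → MemLinftyPlus P Y →
      ∀ a ∈ Set.Ioo (0 : ℝ) 1,
        ρ (fun ω => a * X ω + (1 - a) * Y ω) ≤ a * ρ X + (1 - a) * ρ Y)
    (hFatou : ∀ (X : Ω → ℝ) (Xn : ℕ → Ω → ℝ) (k : ℝ),
      MemLinftyPlus P X → (∀ n, MemLinftyPlus P (Xn n)) →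
      (∀ n, ∀ᵐ ω ∂P, |Xn n ω| ≤ k) →
      TendstoInMeasure P Xn atTop X →
      ρ X ≤ atTop.liminf fun n => ρ (Xn n))
    (X : Ω → ℝ) (hX : MemLinftyPlus P X) :
    ENNReal.ofReal (ρ X) =
      ⨆ (Q : Measure Ω) (_ : IsProbabilityMeasure Q) (_ : Q ≪ P),
        (⨆ (Y : Ω → ℝ) (_ : MemLinftyPlus P Y ∧ ρ Y ≤ 1),
            ENNReal.ofReal (∫ ω, Y ω ∂Q))⁻¹ *
          ENNReal.ofReal (∫ ω, X ω ∂Q) :=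
  convexReturnRiskMeasure_dual_representation_general P ρ hmono hhom hnonneg hconv hFatou X hX
end
end

section
/- Let Φ be an Orlicz function and H_Φ the associated Orlicz premium on L∞₊. Suppose X, Y, Z ∈ L∞₊ satisfy H_Φ(X) = H_Φ(Y) = γ ∈ [0,∞), and the law of Z is the mixture λ·(law of X) + (1−λ)·(law of Y) for some λ ∈ (0,1). Then H_Φ(Z) = γ. -/
open MeasureTheory Filter Set
open scoped ENNReal

noncomputable section

variable {Ω : Type*} [MeasurableSpace Ω]

/-! The acceptance set `{k > 0 | E[Φ(W/k)] ≤ 1}` of a nonnegative `W` is an upper set whose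
infimum is the premium, and it depends only on the law of `W`. For the mixture `Z`, the positive
and negative parts of `E[Φ(Z/k)]` are the `λ`-mixtures of those of `X` and `Y`, so a `k` accepted
for both `X` and `Y` is accepted for `Z`, and a `k` rejected for both is rejected for `Z`. The
acceptance set of `Z` is thus squeezed between the intersection and the union of two upper sets
with the same infimum `γ`. The convention at `Φ(0) = -∞` is compatible with this, since
`P(Z = 0)` is the corresponding mixture of `P(X = 0)` and `P(Y = 0)`. -/

theorem monotone_erealToENNReal : Monotone erealToENNReal := by
  intro x y h
  unfold erealToENNReal
  induction x <;> induction y <;> simp_all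
  exact ENNReal.ofReal_le_ofReal (by exact_mod_cast h)

theorem coe_ennreal_sub_coe_ennreal_le_one_iff {a b : ℝ≥0∞} :
    (a : EReal) - b ≤ 1 ↔ a ≤ b + 1 := by
  rw [EReal.sub_le_iff_le_add (c := 1) (.inr (EReal.coe_ne_top 1)) (.inr (EReal.coe_ne_bot 1)),
    add_comm, ← EReal.coe_ennreal_one, ← EReal.coe_ennreal_add,
    EReal.coe_ennreal_le_coe_ennreal_iff]

section Expectation

variable {μ ν : Measure Ω} {f g : Ω → EReal}

theorem eexp_le_one_iff :
    eexp μ f ≤ 1 ↔ ∫⁻ ω, erealToENNReal (f ω) ∂μ ≤ ∫⁻ ω, erealToENNReal (-f ω) ∂μ + 1 :=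
  coe_ennreal_sub_coe_ennreal_le_one_iff

theorem eexp_mono_ae (h : f ≤ᵐ[μ] g) : eexp μ f ≤ eexp μ g := by
  refine EReal.sub_le_sub ?_ ?_ <;> refine EReal.coe_ennreal_le_coe_ennreal_iff.mpr
    (lintegral_mono_ae ?_) <;> filter_upwards [h] with ω hω
  · exact monotone_erealToENNReal hω
  · exact monotone_erealToENNReal (EReal.neg_le_neg_iff.mpr hω)

theorem eexp_congr_ae (h : f =ᵐ[μ] g) : eexp μ f = eexp μ g :=
  le_antisymm (eexp_mono_ae h.le) (eexp_mono_ae h.symm.le)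

theorem eexp_map {β : Type*} [MeasurableSpace β] {W : Ω → β} {φ : β → EReal}
    (hW : Measurable W) (hφ : Measurable φ) :
    eexp (μ.map W) φ = eexp μ (fun ω => φ (W ω)) := by
  have hpos : Measurable fun x => erealToENNReal (φ x) :=
    monotone_erealToENNReal.measurable.comp hφ
  have hneg : Measurable fun x => erealToENNReal (-φ x) :=
    monotone_erealToENNReal.measurable.comp hφ.neg
  rw [eexp, eexp, lintegral_map hpos hW, lintegral_map hneg hW]

theorem eexp_one [IsProbabilityMeasure μ] : eexp μ (fun _ => 1) = 1 := by
  have h_ne_top : (1 : EReal) ≠ ⊤ := EReal.coe_ne_top 1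
  have h_ne_bot : (1 : EReal) ≠ ⊥ := EReal.coe_ne_bot 1
  simp [eexp, erealToENNReal, h_ne_top, h_ne_bot]

variable {l m : ℝ≥0∞}

theorem eexp_mix_le_one (hlm : l + m = 1) (hμ : eexp μ f ≤ 1) (hν : eexp ν f ≤ 1) :
    eexp (l • μ + m • ν) f ≤ 1 := by
  rw [eexp_le_one_iff] at hμ hν ⊢
  simp only [lintegral_add_measure, lintegral_smul_measure, smul_eq_mul]
  calc _ ≤ l * (∫⁻ ω, erealToENNReal (-f ω) ∂μ + 1)
        + m * (∫⁻ ω, erealToENNReal (-f ω) ∂ν + 1) := by gcongr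
    _ = _ := by rw [mul_add, mul_add, mul_one, mul_one, add_add_add_comm, hlm]

theorem one_lt_eexp_mix (hl0 : l ≠ 0) (hl : l ≠ ⊤) (hlm : l + m = 1)
    (hμ : 1 < eexp μ f) (hν : 1 < eexp ν f) : 1 < eexp (l • μ + m • ν) f := by
  rw [← not_le, eexp_le_one_iff, not_le] at hμ hν ⊢
  simp only [lintegral_add_measure, lintegral_smul_measure, smul_eq_mul]
  have hm : m ≠ ⊤ := ne_top_of_le_ne_top ENNReal.one_ne_top (hlm ▸ le_add_self)
  calc _ = l * (∫⁻ ω, erealToENNReal (-f ω) ∂μ + 1)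
        + m * (∫⁻ ω, erealToENNReal (-f ω) ∂ν + 1) := by
        rw [mul_add, mul_add, mul_one, mul_one, add_add_add_comm, hlm]
    _ < _ := ENNReal.add_lt_add_of_lt_of_le (ENNReal.mul_ne_top hm (ne_top_of_lt hν))
        (ENNReal.mul_lt_mul_right hl0 hl hμ) (by gcongr)

end Expectation

theorem csInf_eq_of_inter_subset_of_subset_union {α : Type*} [ConditionallyCompleteLinearOrder α]
    [DenselyOrdered α] [NoMaxOrder α] {s t u : Set α} (hs : s.Nonempty) (ht : t.Nonempty)
    (hs_bdd : BddBelow s) (ht_bdd : BddBelow t) (hs_up : IsUpperSet s) (ht_up : IsUpperSet t)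
    (hst : sInf s = sInf t) (hinter : s ∩ t ⊆ u) (hunion : u ⊆ s ∪ t) : sInf u = sInf s := by
  have above_mem : ∀ x, sInf s < x → x ∈ u := by
    intro x hx
    obtain ⟨a, has, hax⟩ := exists_lt_of_csInf_lt hs hx
    obtain ⟨b, hbt, hbx⟩ := exists_lt_of_csInf_lt ht (hst ▸ hx)
    exact hinter ⟨hs_up hax.le has, ht_up hbx.le hbt⟩
  have hu_bdd : BddBelow u := (hs_bdd.union ht_bdd).mono hunion
  obtain ⟨x, hx⟩ := exists_gt (sInf s)
  refine le_antisymm (le_of_forall_gt_imp_ge_of_dense fun y hy => csInf_le hu_bdd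
    (above_mem y hy)) (le_csInf ⟨x, above_mem x hx⟩ fun y hy => ?_)
  rcases hunion hy with hys | hyt
  · exact csInf_le hs_bdd hys
  · exact hst ▸ csInf_le ht_bdd hyt

def orliczAcceptanceSet (P : Measure Ω) (Φ : ℝ → EReal) (W : Ω → ℝ) : Set ℝ :=
  {k | 0 < k ∧ eexp P (fun ω => Φ (W ω / k)) ≤ 1}

section Orlicz

variable {P : Measure Ω} {Φ : ℝ → EReal} {W : Ω → ℝ}

theorem orliczPremium_of_degenerate (h : Φ 0 = ⊥ ∧ 0 < P {ω | W ω = 0}) :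
    orliczPremium P Φ W = 0 :=
  if_pos h

theorem orliczPremium_of_not_degenerate (h : ¬(Φ 0 = ⊥ ∧ 0 < P {ω | W ω = 0})) :
    orliczPremium P Φ W = sInf (orliczAcceptanceSet P Φ W) :=
  if_neg h

theorem bddBelow_orliczAcceptanceSet : BddBelow (orliczAcceptanceSet P Φ W) :=
  ⟨0, fun _ hk => hk.1.le⟩

theorem IsOrliczFunction.isUpperSet_orliczAcceptanceSet (hΦ : IsOrliczFunction Φ)
    (hW0 : ∀ᵐ ω ∂P, 0 ≤ W ω) : IsUpperSet (orliczAcceptanceSet P Φ W) := by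
  rintro a b hab ⟨ha, haccept⟩
  have hb : 0 < b := ha.trans_le hab
  refine ⟨hb, (eexp_mono_ae ?_).trans haccept⟩
  filter_upwards [hW0] with ω hω
  exact hΦ.mono _ _ (div_nonneg hω hb.le) (div_le_div_of_nonneg_left hω ha hab)

theorem IsOrliczFunction.orliczAcceptanceSet_nonempty [IsProbabilityMeasure P]
    (hΦ : IsOrliczFunction Φ) (hW0 : ∀ᵐ ω ∂P, 0 ≤ W ω) {C : ℝ} (hWC : ∀ᵐ ω ∂P, W ω ≤ C) :
    (orliczAcceptanceSet P Φ W).Nonempty := by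
  have hk : 0 < max C 1 := lt_max_of_lt_right one_pos
  refine ⟨max C 1, hk, (eexp_mono_ae ?_).trans eexp_one.le⟩
  filter_upwards [hW0, hWC] with ω h0 hC
  exact hΦ.le_one _ (div_nonneg h0 hk.le) ((div_le_one hk).mpr (hC.trans (le_max_left C 1)))

/- `Φ` is only monotone on `[0, ∞)`; clamping at `0` makes the integrand monotone, hence
measurable, on all of `ℝ`, without changing it on the support of a nonnegative variable. -/
theorem IsOrliczFunction.monotone_comp_max_div (hΦ : IsOrliczFunction Φ) {k : ℝ} (hk : 0 ≤ k) :
    Monotone fun x : ℝ => Φ (max x 0 / k) := fun x y hxy =>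
  hΦ.mono _ _ (div_nonneg (le_max_right x 0) hk) (by gcongr)

theorem IsOrliczFunction.orliczAcceptanceSet_eq_map (hΦ : IsOrliczFunction Φ)
    (hW : Measurable W) (hW0 : ∀ᵐ ω ∂P, 0 ≤ W ω) :
    orliczAcceptanceSet P Φ W = {k | 0 < k ∧ eexp (P.map W) (fun x => Φ (max x 0 / k)) ≤ 1} := by
  ext k
  refine and_congr_right fun hk => ?_
  rw [eexp_map hW (hΦ.monotone_comp_max_div hk.le).measurable]
  refine iff_of_eq (congrArg (· ≤ 1) (eexp_congr_ae ?_))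
  filter_upwards [hW0] with ω hω
  rw [max_eq_left hω]

end Orlicz

theorem zero_lt_measure_preimage_iff_of_map_eq_mix {β : Type*} [MeasurableSpace β]
    {P : Measure Ω} {X Y Z : Ω → β} (hX : Measurable X) (hY : Measurable Y) (hZ : Measurable Z)
    {l m : ℝ≥0∞} (hl : l ≠ 0) (hm : m ≠ 0) (hlaw : P.map Z = l • P.map X + m • P.map Y)
    {s : Set β} (hs : MeasurableSet s) :
    0 < P (Z ⁻¹' s) ↔ 0 < P (X ⁻¹' s) ∨ 0 < P (Y ⁻¹' s) := by
  rw [← Measure.map_apply hZ hs, hlaw, Measure.add_apply, Measure.smul_apply, Measure.smul_apply,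
    Measure.map_apply hX hs, Measure.map_apply hY hs, smul_eq_mul, smul_eq_mul]
  simp [pos_iff_ne_zero, hl, hm, or_iff_not_and_not]

theorem orliczPremium_cxls_general
    (P : Measure Ω) [IsProbabilityMeasure P] (Φ : ℝ → EReal)
    (hΦ : IsOrliczFunction Φ)
    (X Y Z : Ω → ℝ) (hX : MemLinftyPlus P X) (hY : MemLinftyPlus P Y)
    (hZ : MemLinftyPlus P Z) (γ : ℝ)
    (hHX : orliczPremium P Φ X = γ) (hHY : orliczPremium P Φ Y = γ)
    (l : ℝ) (hl : l ∈ Set.Ioo (0 : ℝ) 1)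
    (hlaw : P.map Z =
      ENNReal.ofReal l • P.map X + ENNReal.ofReal (1 - l) • P.map Y) :
    orliczPremium P Φ Z = γ := by
  obtain ⟨hXm, hX0, CX, hXC⟩ := hX
  obtain ⟨hYm, hY0, CY, hYC⟩ := hY
  have ha : ENNReal.ofReal l ≠ 0 := ENNReal.ofReal_ne_zero_iff.mpr hl.1
  have hb : ENNReal.ofReal (1 - l) ≠ 0 := ENNReal.ofReal_ne_zero_iff.mpr (sub_pos.mpr hl.2)
  have hab : ENNReal.ofReal l + ENNReal.ofReal (1 - l) = 1 := by
    rw [← ENNReal.ofReal_add hl.1.le (sub_pos.mpr hl.2).le, add_sub_cancel, ENNReal.ofReal_one]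
  have hzero : 0 < P {ω | Z ω = 0} ↔ 0 < P {ω | X ω = 0} ∨ 0 < P {ω | Y ω = 0} :=
    zero_lt_measure_preimage_iff_of_map_eq_mix hXm hYm hZ.1 ha hb hlaw (measurableSet_singleton 0)
  by_cases hdeg : Φ 0 = ⊥ ∧ 0 < P {ω | Z ω = 0}
  · rw [orliczPremium_of_degenerate hdeg]
    rcases hzero.mp hdeg.2 with h | h
    · rw [← hHX, orliczPremium_of_degenerate ⟨hdeg.1, h⟩]
    · rw [← hHY, orliczPremium_of_degenerate ⟨hdeg.1, h⟩]
  rw [orliczPremium_of_not_degenerate fun h => hdeg ⟨h.1, hzero.mpr (.inl h.2)⟩] at hHX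
  rw [orliczPremium_of_not_degenerate fun h => hdeg ⟨h.1, hzero.mpr (.inr h.2)⟩] at hHY
  rw [orliczPremium_of_not_degenerate hdeg, ← hHX]
  refine csInf_eq_of_inter_subset_of_subset_union (hΦ.orliczAcceptanceSet_nonempty hX0 hXC)
    (hΦ.orliczAcceptanceSet_nonempty hY0 hYC) bddBelow_orliczAcceptanceSet
    bddBelow_orliczAcceptanceSet (hΦ.isUpperSet_orliczAcceptanceSet hX0)
    (hΦ.isUpperSet_orliczAcceptanceSet hY0) (hHX.trans hHY.symm) ?_ ?_ <;>
  rw [hΦ.orliczAcceptanceSet_eq_map hXm hX0, hΦ.orliczAcceptanceSet_eq_map hYm hY0,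
    hΦ.orliczAcceptanceSet_eq_map hZ.1 hZ.2.1, hlaw]
  · rintro k ⟨⟨hk, hXk⟩, -, hYk⟩
    exact ⟨hk, eexp_mix_le_one hab hXk hYk⟩
  · rintro k ⟨hk, hZk⟩
    by_contra hrej
    exact (one_lt_eexp_mix ha ENNReal.ofReal_ne_top hab (not_le.mp fun h => hrej (.inl ⟨hk, h⟩))
      (not_le.mp fun h => hrej (.inr ⟨hk, h⟩))).not_ge hZk

/-- the Orlicz premium has convex level sets with respect to mixtures
of laws (the CxLS property). -/
theorem orliczPremium_cxls
    (P : Measure Ω) [IsProbabilityMeasure P] (Φ : ℝ → EReal)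
    (hΦ : IsOrliczFunction Φ)
    (X Y Z : Ω → ℝ) (hX : MemLinftyPlus P X) (hY : MemLinftyPlus P Y)
    (hZ : MemLinftyPlus P Z) (γ : ℝ) (hγ : 0 ≤ γ)
    (hHX : orliczPremium P Φ X = γ) (hHY : orliczPremium P Φ Y = γ)
    (l : ℝ) (hl : l ∈ Set.Ioo (0 : ℝ) 1)
    (hlaw : P.map Z =
      ENNReal.ofReal l • P.map X + ENNReal.ofReal (1 - l) • P.map Y) :
    orliczPremium P Φ Z = γ :=
  orliczPremium_cxls_general P Φ hΦ X Y Z hX hY hZ γ hHX hHY l hl hlaw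
end
end
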